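/- Let A, N_1,…,N_m ∈ ℝ^{n×n}, X₀ ∈ ℝ^{n×q}, C ∈ ℝ^{p×n} and Ã, Ñ_1,…,Ñ_m ∈ ℝ^{r×r}, X̃₀ ∈ ℝ^{r×q}, C̃ ∈ ℝ^{p×r}, let v₀ ∈ ℝ^q, γ > 0, and let u ∈ L² be a continuous control. Let y_{x₀}(t) = C x_{x₀}(t) where x_{x₀} solves ẋ = A x + Σ_k N_k x u_k, x(0) = X₀ v₀, and let ỹ_{x₀}(t) = C̃ x̃_{x₀}(t) where x̃_{x₀} solves the reduced homogeneous system with matrices Ã, Ñ_k and x̃(0) = X̃₀ v₀. Then for all t ≥ 0, ‖y_{x₀}(t) − ỹ_{x₀}(t)‖₂² ≤ tr([C −C̃] Z^e_γ(t) [C −C̃]^⊤) · exp{∫₀^t ‖γ u⁰(v)‖₂² dv} · ‖v₀‖₂², where Z^e_γ solves Ż^e = A^e Z^e + Z^e (A^e)^⊤ + γ^{-2} Σ_k N_k^e Z^e (N_k^e)^⊤ with A^e = diag(A, Ã), N_k^e = diag(N_k, Ñ_k) and Z^e(0) = [X₀; X̃₀][X₀; X̃₀]^⊤, and u⁰ is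 taken with respect to the augmented matrices N_k^e. -/

import Mathlib

open MeasureTheory Matrix
open scoped Classical

attribute [local instance] Matrix.normedAddCommGroup Matrix.normedSpace

/-
Stack the states into `w = (x, x̃)`, a solution of the augmented bilinear system with `A^e, N_k^e`,
and let `F(s) = ∫₀ˢ ‖γ u⁰(v)‖² dv` and `Π(s) = ‖v₀‖² Z^e(s) - e^{-F(s)} w(s) w(s)ᵀ`.
Completing the square `2 u a b ≤ (γ u a)² + (γ⁻¹ b)²` in each bilinear term gives `Π' ≥ 𝓛 Π`
(as quadratic forms) for the generalized Lyapunov operator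
`𝓛 X = A^e X + X A^eᵀ + Σₖ (γ⁻¹ N_k^e) X (γ⁻¹ N_k^e)ᵀ`, and `Π(0) ≥ 0` is Cauchy–Schwarz.
Such a differential inequality keeps `Π` positive semidefinite: at the first time `s` at which
`Π(s) + ε e^{Ks} I` has a null vector `z`, `z` lies in the kernel of its symmetric part, whence
`zᵀ (𝓛 Π) z ≥ -ε e^{Ks} zᵀ (2 A^e + Σₖ Nₖ Nₖᵀ) z`; for `K` large the barrier grows faster, so
the form was already negative slightly before `s`. Letting `ε → 0`, `Π(t) ≥ 0`, and testing `Π(t)`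
against the rows of `[C  -C̃]` gives the bound. As `Z^e` is not assumed symmetric, positivity is
expressed by quadratic forms rather than `Matrix.PosSemidef`.
-/

open Set Filter Topology

lemma eq_zero_of_forall_nonneg_mul_add_sq_mul {a b : ℝ} (h : ∀ s : ℝ, 0 ≤ s * a + s ^ 2 * b) :
    a = 0 := by
  have := discrim_le_zero (a := b) (b := a) (c := 0) fun s => by linarith [h s]
  rw [discrim] at this
  nlinarith [sq_nonneg a]

lemma eventually_nhdsLT_lt_of_hasDerivAt_pos {f : ℝ → ℝ} {f' x : ℝ} (hf : HasDerivAt f f' x)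
    (hf' : 0 < f') : ∀ᶠ y in 𝓝[<] x, f y < f x := by
  filter_upwards [(hasDerivAt_iff_tendsto_slope_left_right.mp hf).1.eventually
    (eventually_gt_nhds hf'), self_mem_nhdsWithin] with y hslope (hyx : y < x)
  rw [slope_def_field] at hslope
  by_contra! h
  exact (div_nonpos_of_nonneg_of_nonpos (sub_nonneg.mpr h) (sub_neg.mpr hyx).le).not_gt hslope

lemma forall_pos_of_not_first_zero {E : Type*} [TopologicalSpace E] [T2Space E] {S : Set E}
    (hS : IsCompact S) {g : ℝ → E → ℝ} {t : ℝ}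
    (hg : ContinuousOn (Function.uncurry g) (Icc 0 t ×ˢ S)) (h0 : ∀ z ∈ S, 0 < g 0 z)
    (hfirst : ∀ s ∈ Ioc 0 t, ∀ z ∈ S, g s z = 0 → (∀ z' ∈ S, 0 ≤ g s z') →
      (∀ s' ∈ Ico 0 s, ∀ z' ∈ S, 0 < g s' z') → False) :
    ∀ s ∈ Icc 0 t, ∀ z ∈ S, 0 < g s z := by
  by_contra! hbad
  set bad := (Icc 0 t ×ˢ S) ∩ Function.uncurry g ⁻¹' Iic 0
  have hcompact : IsCompact bad :=
    (isCompact_Icc.prod hS).of_isClosed_subset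
      (hg.preimage_isClosed_of_isClosed (isCompact_Icc.prod hS).isClosed isClosed_Iic)
      inter_subset_left
  obtain ⟨s, hs, z, hz, hgz⟩ := hbad
  obtain ⟨⟨s₀, z₀⟩, ⟨⟨hs₀, hz₀⟩, hg₀⟩, hmin⟩ :=
    hcompact.exists_isMinOn ⟨(s, z), ⟨hs, hz⟩, hgz⟩ continuous_fst.continuousOn
  have hbefore : ∀ s' ∈ Ico 0 s₀, ∀ z' ∈ S, 0 < g s' z' := fun s' hs' z' hz' => by
    by_contra! h
    have : s₀ ≤ s' := hmin (show (s', z') ∈ bad from ⟨⟨⟨hs'.1, hs'.2.le.trans hs₀.2⟩, hz'⟩, h⟩)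
    exact this.not_gt hs'.2
  have hpos : 0 < s₀ := hs₀.1.lt_of_ne fun h => (h0 z₀ hz₀).not_ge (h ▸ hg₀)
  have hat : ∀ z' ∈ S, 0 ≤ g s₀ z' := fun z' hz' => by
    have hcont : ContinuousWithinAt (fun s => g s z') (Icc 0 t) s₀ :=
      (hg.comp (continuousOn_id.prodMk continuousOn_const) fun s hs => ⟨hs, hz'⟩) s₀ hs₀
    have := right_nhdsWithin_Ioo_neBot hpos
    exact ge_of_tendsto
      (hcont.mono (Ioo_subset_Icc_self.trans (Icc_subset_Icc_right hs₀.2))).tendsto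
      (eventually_nhdsWithin_of_forall fun s' hs' => (hbefore s' ⟨hs'.1.le, hs'.2⟩ z' hz').le)
  exact hfirst s₀ ⟨hpos, hs₀.2⟩ z₀ hz₀ (le_antisymm hg₀ (hat z₀ hz₀)) hat hbefore

lemma nonneg_of_forall_mem_sphere_nonneg {E : Type*} [NormedAddCommGroup E] [NormedSpace ℝ E]
    {q : E → ℝ} (hq : ∀ (a : ℝ) v, q (a • v) = a ^ 2 * q v)
    (h : ∀ v ∈ Metric.sphere (0 : E) 1, 0 ≤ q v) (v : E) : 0 ≤ q v := by
  rcases eq_or_ne v 0 with rfl | hv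
  · exact (by simpa using hq 0 0 : q 0 = 0).ge
  have hnorm : 0 < ‖v‖ := norm_pos_iff.mpr hv
  have hv' : ‖v‖⁻¹ • v ∈ Metric.sphere (0 : E) 1 := by
    rw [mem_sphere_zero_iff_norm, norm_smul, norm_inv, norm_norm, inv_mul_cancel₀ hnorm.ne']
  calc 0 ≤ ‖v‖ ^ 2 * q (‖v‖⁻¹ • v) := mul_nonneg (sq_nonneg _) (h _ hv')
    _ = q v := by rw [← hq, smul_smul, mul_inv_cancel₀ hnorm.ne', one_smul]

section

variable {ι σ : Type*} [Fintype ι] [Fintype σ]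

lemma dotProduct_mulVec_eq_transpose_mulVec {m n : Type*} [Fintype m] [Fintype n]
    (M : Matrix m n ℝ) (z : m → ℝ) (v : n → ℝ) :
    z ⬝ᵥ M *ᵥ v = Mᵀ *ᵥ z ⬝ᵥ v := by
  rw [dotProduct_mulVec, ← mulVec_transpose]

lemma dotProduct_vecMulVec_mulVec (a b y z : ι → ℝ) :
    z ⬝ᵥ vecMulVec a b *ᵥ y = (z ⬝ᵥ a) * (b ⬝ᵥ y) := by
  simp only [vecMulVec_mulVec, op_smul_eq_smul, dotProduct_smul, smul_eq_mul, mul_comm]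

lemma exists_dotProduct_mulVec_le (M : Matrix ι ι ℝ) :
    ∃ β, ∀ z : ι → ℝ, z ⬝ᵥ M *ᵥ z ≤ β * (z ⬝ᵥ z) := by
  refine ⟨∑ i, ∑ j, |M i j|, fun z => ?_⟩
  have hsq : ∀ i, z i ^ 2 ≤ z ⬝ᵥ z := fun i => by
    simpa [dotProduct, sq] using
      Finset.single_le_sum (fun j _ => mul_self_nonneg (z j)) (Finset.mem_univ i)
  have hprod : ∀ i j, M i j * (z i * z j) ≤ |M i j| * (z ⬝ᵥ z) := fun i j => by
    have : z i * z j ≤ z ⬝ᵥ z := by nlinarith [hsq i, hsq j, sq_nonneg (z i - z j)]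
    have : -(z ⬝ᵥ z) ≤ z i * z j := by nlinarith [hsq i, hsq j, sq_nonneg (z i + z j)]
    cases abs_cases (M i j) <;> nlinarith
  calc z ⬝ᵥ M *ᵥ z = ∑ i, ∑ j, M i j * (z i * z j) := by
        simp only [dotProduct, mulVec, Finset.mul_sum]
        exact Finset.sum_congr rfl fun i _ => Finset.sum_congr rfl fun j _ => by ring
    _ ≤ ∑ i, ∑ j, |M i j| * (z ⬝ᵥ z) :=
        Finset.sum_le_sum fun i _ => Finset.sum_le_sum fun j _ => hprod i j
    _ = (∑ i, ∑ j, |M i j|) * (z ⬝ᵥ z) := by simp only [Finset.sum_mul]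

lemma dotProduct_add_transpose_mulVec_of_null {X : Matrix ι ι ℝ} {c : ℝ} {z : ι → ℝ}
    (hX : ∀ v, 0 ≤ v ⬝ᵥ X *ᵥ v + c * (v ⬝ᵥ v)) (hz : z ⬝ᵥ X *ᵥ z + c * (z ⬝ᵥ z) = 0)
    (y : ι → ℝ) : y ⬝ᵥ (X + Xᵀ) *ᵥ z = -(2 * c * (y ⬝ᵥ z)) := by
  have hexp : ∀ s : ℝ, (z + s • y) ⬝ᵥ X *ᵥ (z + s • y) + c * ((z + s • y) ⬝ᵥ (z + s • y))
      = s * (y ⬝ᵥ (X + Xᵀ) *ᵥ z + 2 * c * (y ⬝ᵥ z)) + s ^ 2 * (y ⬝ᵥ X *ᵥ y + c * (y ⬝ᵥ y)) := by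
    intro s
    have h1 : z ⬝ᵥ X *ᵥ y = y ⬝ᵥ Xᵀ *ᵥ z := by
      rw [dotProduct_mulVec_eq_transpose_mulVec, dotProduct_comm]
    simp only [mulVec_add, mulVec_smul, add_mulVec, dotProduct_add, add_dotProduct,
      dotProduct_smul, smul_dotProduct, smul_eq_mul, h1, dotProduct_comm z y]
    linear_combination hz
  linarith [eq_zero_of_forall_nonneg_mul_add_sq_mul fun s => hexp s ▸ hX (z + s • y)]

lemma trace_mul_mul_transpose_nonneg {p : Type*} [Fintype p] (L : Matrix p ι ℝ)
    {X : Matrix ι ι ℝ} (hX : ∀ z, 0 ≤ z ⬝ᵥ X *ᵥ z) : 0 ≤ (L * X * Lᵀ).trace := by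
  refine Finset.sum_nonneg fun i _ => (hX (L i)).trans_eq ?_
  simp only [diag, mul_apply, transpose_apply, dotProduct, mulVec, Finset.sum_mul, Finset.mul_sum]
  rw [Finset.sum_comm]
  exact Finset.sum_congr rfl fun j _ => Finset.sum_congr rfl fun k _ => by ring

lemma dotProduct_mulVec_sum_sq_smul_sub_vecMulVec_nonneg {q : Type*} [Fintype q]
    (X : Matrix ι q ℝ) (v : q → ℝ) (z : ι → ℝ) :
    0 ≤ z ⬝ᵥ ((∑ i, v i ^ 2) • (X * Xᵀ) - vecMulVec (X *ᵥ v) (X *ᵥ v)) *ᵥ z := by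
  have hcs := Finset.sum_mul_sq_le_sq_mul_sq Finset.univ (Xᵀ *ᵥ z) v
  have hXX : z ⬝ᵥ (X * Xᵀ) *ᵥ z = Xᵀ *ᵥ z ⬝ᵥ Xᵀ *ᵥ z := by
    rw [← mulVec_mulVec, dotProduct_mulVec_eq_transpose_mulVec]
  have hXv : z ⬝ᵥ X *ᵥ v = Xᵀ *ᵥ z ⬝ᵥ v := dotProduct_mulVec_eq_transpose_mulVec X z v
  rw [sub_mulVec, dotProduct_sub, smul_mulVec, dotProduct_smul, smul_eq_mul, hXX,
    dotProduct_vecMulVec_mulVec, hXv, dotProduct_comm (X *ᵥ v), hXv]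
  simp only [dotProduct, ← sq] at hcs ⊢
  nlinarith [hcs]

lemma HasDerivAt.dotProduct_mulVec {P : ℝ → Matrix ι ι ℝ} {P' : Matrix ι ι ℝ} {s : ℝ}
    (hP : HasDerivAt P P' s) (z : ι → ℝ) :
    HasDerivAt (fun s => z ⬝ᵥ P s *ᵥ z) (z ⬝ᵥ P' *ᵥ z) s := by
  have hentry : ∀ i j, HasDerivAt (fun s => P s i j) (P' i j) s :=
    fun i j => hasDerivAt_pi.mp (hasDerivAt_pi.mp hP i) j
  simp only [dotProduct, mulVec]
  exact HasDerivAt.fun_sum fun i _ =>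
    (HasDerivAt.fun_sum fun j _ => (hentry i j).mul_const (z j)).const_mul (z i)

lemma HasDerivAt.vecMulVec {a b : ℝ → ι → ℝ} {a' b' : ι → ℝ} {s : ℝ}
    (ha : HasDerivAt a a' s) (hb : HasDerivAt b b' s) :
    HasDerivAt (fun s => vecMulVec (a s) (b s)) (vecMulVec a' (b s) + vecMulVec (a s) b') s := by
  refine hasDerivAt_pi.mpr fun i => hasDerivAt_pi.mpr fun j => ?_
  simpa only [vecMulVec_apply, Matrix.add_apply] using
    (hasDerivAt_pi.mp ha i).fun_mul (hasDerivAt_pi.mp hb j)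

lemma HasDerivAt.sumElim {m n : Type*} {x : ℝ → m → ℝ} {y : ℝ → n → ℝ} {x' : m → ℝ}
    {y' : n → ℝ} {s : ℝ} (hx : HasDerivAt x x' s) (hy : HasDerivAt y y' s) :
    HasDerivAt (fun s => Sum.elim (x s) (y s)) (Sum.elim x' y') s := by
  refine hasDerivAt_pi.mpr fun i => ?_
  cases i with
  | inl i => exact hasDerivAt_pi.mp hx i
  | inr i => exact hasDerivAt_pi.mp hy i

def lyapunovOp (B : Matrix ι ι ℝ) (N : σ → Matrix ι ι ℝ) : Matrix ι ι ℝ →ₗ[ℝ] Matrix ι ι ℝ where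
  toFun X := B * X + X * Bᵀ + ∑ k, N k * X * (N k)ᵀ
  map_add' X Y := by
    simp only [Matrix.mul_add, Matrix.add_mul, Finset.sum_add_distrib]
    abel
  map_smul' c X := by
    simp only [Matrix.mul_smul, Matrix.smul_mul, Finset.smul_sum, smul_add, RingHom.id_apply]

lemma dotProduct_lyapunovOp_mulVec (B : Matrix ι ι ℝ) (N : σ → Matrix ι ι ℝ)
    (X : Matrix ι ι ℝ) (z : ι → ℝ) :
    z ⬝ᵥ lyapunovOp B N X *ᵥ z = Bᵀ *ᵥ z ⬝ᵥ (X + Xᵀ) *ᵥ z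
      + ∑ k, (N k)ᵀ *ᵥ z ⬝ᵥ X *ᵥ ((N k)ᵀ *ᵥ z) := by
  simp only [lyapunovOp, LinearMap.coe_mk, AddHom.coe_mk, add_mulVec, sum_mulVec,
    dotProduct_add, dotProduct_sum, ← mulVec_mulVec]
  rw [dotProduct_mulVec_eq_transpose_mulVec B, dotProduct_mulVec_eq_transpose_mulVec X z,
    dotProduct_comm (Xᵀ *ᵥ z)]
  congr 1
  exact Finset.sum_congr rfl fun k _ => dotProduct_mulVec_eq_transpose_mulVec _ _ _

lemma dotProduct_lyapunovOp_mulVec_ge_of_null (B : Matrix ι ι ℝ) (N : σ → Matrix ι ι ℝ)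
    {X : Matrix ι ι ℝ} {c : ℝ} {z : ι → ℝ}
    (hX : ∀ v, 0 ≤ v ⬝ᵥ X *ᵥ v + c * (v ⬝ᵥ v)) (hz : z ⬝ᵥ X *ᵥ z + c * (z ⬝ᵥ z) = 0) :
    -(c * (z ⬝ᵥ ((2 : ℝ) • B + ∑ k, N k * (N k)ᵀ) *ᵥ z)) ≤ z ⬝ᵥ lyapunovOp B N X *ᵥ z := by
  have hB : Bᵀ *ᵥ z ⬝ᵥ (X + Xᵀ) *ᵥ z = -(2 * c * (z ⬝ᵥ B *ᵥ z)) := by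
    rw [dotProduct_add_transpose_mulVec_of_null hX hz, dotProduct_mulVec_eq_transpose_mulVec B]
  have hN : z ⬝ᵥ (∑ k, N k * (N k)ᵀ) *ᵥ z = ∑ k, (N k)ᵀ *ᵥ z ⬝ᵥ (N k)ᵀ *ᵥ z := by
    simp only [sum_mulVec, dotProduct_sum, ← mulVec_mulVec,
      dotProduct_mulVec_eq_transpose_mulVec (N _)]
  rw [dotProduct_lyapunovOp_mulVec, hB, add_mulVec, dotProduct_add, hN, smul_mulVec,
    dotProduct_smul, smul_eq_mul, mul_add, Finset.mul_sum]
  have := Finset.sum_nonneg fun k (_ : k ∈ Finset.univ) => hX ((N k)ᵀ *ᵥ z)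
  rw [Finset.sum_add_distrib] at this
  linarith

lemma lyapunovOp_vecMulVec_self (B : Matrix ι ι ℝ) (N : σ → Matrix ι ι ℝ) (w : ι → ℝ) :
    lyapunovOp B N (vecMulVec w w) = vecMulVec (B *ᵥ w) w + vecMulVec w (B *ᵥ w)
      + ∑ k, vecMulVec (N k *ᵥ w) (N k *ᵥ w) := by
  simp only [lyapunovOp, LinearMap.coe_mk, AddHom.coe_mk, mul_vecMulVec, vecMulVec_mul,
    vecMul_transpose]

lemma lyapunovOp_inv_smul (B : Matrix ι ι ℝ) (N : σ → Matrix ι ι ℝ) (γ : ℝ) (X : Matrix ι ι ℝ) :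
    lyapunovOp B (fun k => γ⁻¹ • N k) X = B * X + X * Bᵀ + (γ ^ 2)⁻¹ • ∑ k, N k * X * (N k)ᵀ := by
  simp only [lyapunovOp, LinearMap.coe_mk, AddHom.coe_mk, transpose_smul, Matrix.smul_mul,
    Matrix.mul_smul, smul_smul, Finset.smul_sum, sq, mul_inv]

lemma dotProduct_mulVec_add_barrier_pos (B : Matrix ι ι ℝ) (N : σ → Matrix ι ι ℝ)
    {P P' : ℝ → Matrix ι ι ℝ} {t β ε : ℝ}
    (hP : ∀ s ∈ Icc 0 t, HasDerivAt P (P' s) s)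
    (hL : ∀ s ∈ Icc 0 t, ∀ z, z ⬝ᵥ lyapunovOp B N (P s) *ᵥ z ≤ z ⬝ᵥ P' s *ᵥ z)
    (h0 : ∀ z, 0 ≤ z ⬝ᵥ P 0 *ᵥ z)
    (hβ : ∀ z, z ⬝ᵥ ((2 : ℝ) • B + ∑ k, N k * (N k)ᵀ) *ᵥ z ≤ β * (z ⬝ᵥ z)) (hε : 0 < ε) :
    ∀ s ∈ Icc 0 t, ∀ z ∈ Metric.sphere (0 : ι → ℝ) 1,
      0 < z ⬝ᵥ P s *ᵥ z + ε * Real.exp ((β + 1) * s) * (z ⬝ᵥ z) := by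
  have hnorm : ∀ z ∈ Metric.sphere (0 : ι → ℝ) 1, 0 < z ⬝ᵥ z := fun z hz => by
    simpa using dotProduct_self_star_pos_iff.mpr (Metric.ne_of_mem_sphere hz one_ne_zero)
  refine forall_pos_of_not_first_zero (isCompact_sphere 0 1) ?_ ?_ ?_
  · have hPc : ContinuousOn P (Icc 0 t) := fun s hs => (hP s hs).continuousAt.continuousWithinAt
    refine ContinuousOn.add ?_ (Continuous.continuousOn (by fun_prop))
    exact (continuous_snd.dotProduct
      (continuous_fst.matrix_mulVec continuous_snd)).comp_continuousOn
      ((hPc.comp continuousOn_fst fun p hp => hp.1).prodMk continuousOn_snd)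
  · intro z hz
    simpa using add_pos_of_nonneg_of_pos (h0 z) (mul_pos hε (hnorm z hz))
  · intro s hs z hz hzero hnonneg hbefore
    set c := ε * Real.exp ((β + 1) * s)
    have hX : ∀ v, 0 ≤ v ⬝ᵥ P s *ᵥ v + c * (v ⬝ᵥ v) := by
      refine nonneg_of_forall_mem_sphere_nonneg (fun a v => ?_) hnonneg
      simp only [mulVec_smul, dotProduct_smul, smul_dotProduct, smul_eq_mul]
      ring
    have hs' : s ∈ Icc 0 t := Ioc_subset_Icc_self hs
    have hderiv : HasDerivAt (fun s => z ⬝ᵥ P s *ᵥ z + ε * Real.exp ((β + 1) * s) * (z ⬝ᵥ z))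
        (z ⬝ᵥ P' s *ᵥ z + c * (β + 1) * (z ⬝ᵥ z)) s := by
      have := (((hasDerivAt_id' s).const_mul (β + 1)).exp.const_mul ε).mul_const (z ⬝ᵥ z)
      exact (((hP s hs').dotProduct_mulVec z).add this).congr_deriv (by ring)
    -- at a null vector `𝓛` costs at most `c β ‖z‖²`, while the barrier grows by `c (β + 1) ‖z‖²`
    have hslope : 0 < z ⬝ᵥ P' s *ᵥ z + c * (β + 1) * (z ⬝ᵥ z) := by
      have := (dotProduct_lyapunovOp_mulVec_ge_of_null B N hX hzero).trans (hL s hs' z)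
      have := mul_le_mul_of_nonneg_left (hβ z) (by positivity : 0 ≤ c)
      nlinarith [mul_pos (by positivity : 0 < c) (hnorm z hz)]
    obtain ⟨s', hs'lt, hs'mem⟩ := ((eventually_nhdsLT_lt_of_hasDerivAt_pos hderiv hslope).and
      (Ioo_mem_nhdsLT hs.1)).exists
    exact (hbefore s' ⟨hs'mem.1.le, hs'mem.2⟩ z hz).not_gt (hzero ▸ hs'lt)

theorem dotProduct_mulVec_nonneg_of_lyapunovOp_le (B : Matrix ι ι ℝ) (N : σ → Matrix ι ι ℝ)
    {P P' : ℝ → Matrix ι ι ℝ} {t : ℝ} (ht : 0 ≤ t)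
    (hP : ∀ s ∈ Icc 0 t, HasDerivAt P (P' s) s)
    (hL : ∀ s ∈ Icc 0 t, ∀ z, z ⬝ᵥ lyapunovOp B N (P s) *ᵥ z ≤ z ⬝ᵥ P' s *ᵥ z)
    (h0 : ∀ z, 0 ≤ z ⬝ᵥ P 0 *ᵥ z) (z : ι → ℝ) : 0 ≤ z ⬝ᵥ P t *ᵥ z := by
  obtain ⟨β, hβ⟩ := exists_dotProduct_mulVec_le ((2 : ℝ) • B + ∑ k, N k * (N k)ᵀ)
  have hbarrier : ∀ ε > 0, 0 ≤ z ⬝ᵥ P t *ᵥ z + ε * (Real.exp ((β + 1) * t) * (z ⬝ᵥ z)) :=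
    fun ε hε => by
      refine nonneg_of_forall_mem_sphere_nonneg (q := fun v =>
        v ⬝ᵥ P t *ᵥ v + ε * (Real.exp ((β + 1) * t) * (v ⬝ᵥ v))) (fun a v => ?_) (fun v hv => ?_) z
      · simp only [mulVec_smul, dotProduct_smul, smul_dotProduct, smul_eq_mul]
        ring
      · simpa only [mul_assoc] using
          (dotProduct_mulVec_add_barrier_pos B N hP hL h0 hβ hε t ⟨ht, le_rfl⟩ v hv).le
  refine ge_of_tendsto (f := fun ε => z ⬝ᵥ P t *ᵥ z + ε * (Real.exp ((β + 1) * t) * (z ⬝ᵥ z)))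
    (x := 𝓝[>] 0) ?_ (eventually_nhdsWithin_of_forall hbarrier)
  simpa using ((by fun_prop : Continuous fun ε : ℝ =>
    z ⬝ᵥ P t *ᵥ z + ε * (Real.exp ((β + 1) * t) * (z ⬝ᵥ z))).tendsto 0).mono_left nhdsWithin_le_nhds

lemma two_mul_dotProduct_le_dotProduct_lyapunovOp_vecMulVec (B : Matrix ι ι ℝ)
    (N : σ → Matrix ι ι ℝ) {γ : ℝ} (hγ : γ ≠ 0) (v : σ → ℝ) (w z : ι → ℝ) :
    2 * (z ⬝ᵥ w) * (z ⬝ᵥ (B *ᵥ w + ∑ k, v k • N k *ᵥ w))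
      ≤ (∑ k, (γ * if N k = 0 then 0 else v k) ^ 2) * (z ⬝ᵥ w) ^ 2
        + z ⬝ᵥ lyapunovOp B (fun k => γ⁻¹ • N k) (vecMulVec w w) *ᵥ z := by
  have hterm : ∀ k, 2 * (z ⬝ᵥ w) * (v k * (z ⬝ᵥ N k *ᵥ w))
      ≤ (γ * if N k = 0 then 0 else v k) ^ 2 * (z ⬝ᵥ w) ^ 2 + (γ⁻¹ * (z ⬝ᵥ N k *ᵥ w)) ^ 2 := by
    intro k
    split_ifs with hN
    · simp [hN]
    · have : (γ * v k) ^ 2 * (z ⬝ᵥ w) ^ 2 + (γ⁻¹ * (z ⬝ᵥ N k *ᵥ w)) ^ 2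
          - 2 * (z ⬝ᵥ w) * (v k * (z ⬝ᵥ N k *ᵥ w))
          = (γ * v k * (z ⬝ᵥ w) - γ⁻¹ * (z ⬝ᵥ N k *ᵥ w)) ^ 2 := by
        field_simp
        ring
      nlinarith [sq_nonneg (γ * v k * (z ⬝ᵥ w) - γ⁻¹ * (z ⬝ᵥ N k *ᵥ w))]
  have := Finset.sum_le_sum fun k (_ : k ∈ Finset.univ) => hterm k
  rw [Finset.sum_add_distrib, ← Finset.mul_sum, ← Finset.sum_mul] at this
  simp only [lyapunovOp_vecMulVec_self, add_mulVec, sum_mulVec, dotProduct_add, dotProduct_sum,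
    dotProduct_vecMulVec_mulVec, smul_mulVec, dotProduct_smul, smul_dotProduct, smul_eq_mul,
    dotProduct_comm w z, dotProduct_comm (_ *ᵥ w) z, ← sq]
  linarith

lemma hasDerivAt_sumElim_fromBlocks {m n : Type*} [Fintype m] [Fintype n]
    {A : Matrix m m ℝ} {N : σ → Matrix m m ℝ} {At : Matrix n n ℝ} {Nt : σ → Matrix n n ℝ}
    {v : σ → ℝ} {x : ℝ → m → ℝ} {y : ℝ → n → ℝ} {s : ℝ}
    (hx : HasDerivAt x (A *ᵥ x s + ∑ k, v k • N k *ᵥ x s) s)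
    (hy : HasDerivAt y (At *ᵥ y s + ∑ k, v k • Nt k *ᵥ y s) s) :
    HasDerivAt (fun s => Sum.elim (x s) (y s))
      (fromBlocks A 0 0 At *ᵥ Sum.elim (x s) (y s)
        + ∑ k, v k • fromBlocks (N k) 0 0 (Nt k) *ᵥ Sum.elim (x s) (y s)) s := by
  convert hx.sumElim hy using 1
  ext (i | i) <;> simp [fromBlocks_mulVec, Finset.sum_apply]

theorem dotProduct_mulVec_nonneg_of_bilinear (B : Matrix ι ι ℝ) (N : σ → Matrix ι ι ℝ)
    {γ : ℝ} (hγ : γ ≠ 0) {u : ℝ → σ → ℝ} (hu : Continuous u) {w : ℝ → ι → ℝ}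
    {Z : ℝ → Matrix ι ι ℝ} {a t : ℝ} (ht : 0 ≤ t)
    (hw : ∀ s ∈ Icc 0 t, HasDerivAt w (B *ᵥ w s + ∑ k, u s k • N k *ᵥ w s) s)
    (hZ : ∀ s ∈ Icc 0 t, HasDerivAt Z (lyapunovOp B (fun k => γ⁻¹ • N k) (Z s)) s)
    (h0 : ∀ z, 0 ≤ z ⬝ᵥ (a • Z 0 - vecMulVec (w 0) (w 0)) *ᵥ z) (z : ι → ℝ) :
    0 ≤ z ⬝ᵥ (a • Z t - Real.exp (-∫ v in (0 : ℝ)..t,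
      ∑ k, (γ * if N k = 0 then 0 else u v k) ^ 2) • vecMulVec (w t) (w t)) *ᵥ z := by
  set f := fun v => ∑ k, (γ * if N k = 0 then 0 else u v k) ^ 2
  have hf : Continuous f := continuous_finsetSum _ fun k _ =>
    (continuous_const.mul (continuous_const.if_const _ ((continuous_apply k).comp hu))).pow 2
  have hF : ∀ s, HasDerivAt (fun s => ∫ v in (0 : ℝ)..s, f v) (f s) s :=
    fun s => (hf.integral_hasStrictDerivAt 0 s).hasDerivAt
  refine dotProduct_mulVec_nonneg_of_lyapunovOp_le B (fun k => γ⁻¹ • N k) (P := fun s =>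
    a • Z s - Real.exp (-∫ v in (0 : ℝ)..s, f v) • vecMulVec (w s) (w s)) ht
    (fun s hs => ((hZ s hs).const_smul a).sub ((hF s).neg.exp.smul ((hw s hs).vecMulVec (hw s hs))))
    (fun s hs z => ?_) (by simpa using h0) z
  have := mul_le_mul_of_nonneg_left
    (two_mul_dotProduct_le_dotProduct_lyapunovOp_vecMulVec B N hγ (u s) (w s) z)
    (Real.exp_pos (-∫ v in (0 : ℝ)..s, f v)).le
  simp only [map_sub, map_smul, sub_mulVec, add_mulVec, smul_mulVec, dotProduct_sub,
    dotProduct_add, dotProduct_smul, smul_eq_mul, dotProduct_vecMulVec_mulVec, Pi.neg_apply,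
    dotProduct_comm (w s) z, dotProduct_comm (B *ᵥ w s + _) z, f] at this ⊢
  linarith

end

theorem output_error_preliminary_bound
    {n r q p m : ℕ}
    (A : Matrix (Fin n) (Fin n) ℝ) (N : Fin m → Matrix (Fin n) (Fin n) ℝ)
    (X₀ : Matrix (Fin n) (Fin q) ℝ) (C : Matrix (Fin p) (Fin n) ℝ)
    (At : Matrix (Fin r) (Fin r) ℝ) (Nt : Fin m → Matrix (Fin r) (Fin r) ℝ)
    (Xt₀ : Matrix (Fin r) (Fin q) ℝ) (Ct : Matrix (Fin p) (Fin r) ℝ)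
    (v₀ : Fin q → ℝ) (γ : ℝ) (hγ : 0 < γ)
    (u : ℝ → Fin m → ℝ) (hu : Continuous u)
    -- full homogeneous state `x` with output `C x`
    (x : ℝ → Fin n → ℝ) (hx0 : x 0 = X₀.mulVec v₀)
    (hxode : ∀ t, 0 ≤ t →
      HasDerivAt x (A.mulVec (x t) + ∑ k, u t k • (N k).mulVec (x t)) t)
    -- reduced homogeneous state `xt` with output `Ct xt`
    (xt : ℝ → Fin r → ℝ) (hxt0 : xt 0 = Xt₀.mulVec v₀)
    (hxtode : ∀ t, 0 ≤ t →
      HasDerivAt xt (At.mulVec (xt t) + ∑ k, u t k • (Nt k).mulVec (xt t)) t)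
    -- `Ze` solves the augmented generalized Lyapunov matrix ODE
    (Ze : ℝ → Matrix (Fin n ⊕ Fin r) (Fin n ⊕ Fin r) ℝ)
    (hZe0 : Ze 0 = Matrix.fromRows X₀ Xt₀ * (Matrix.fromRows X₀ Xt₀)ᵀ)
    (hZeode : ∀ t, 0 ≤ t → HasDerivAt Ze
      (Matrix.fromBlocks A 0 0 At * Ze t + Ze t * (Matrix.fromBlocks A 0 0 At)ᵀ
        + (γ ^ 2)⁻¹ • ∑ k,
            Matrix.fromBlocks (N k) 0 0 (Nt k) * Ze t
              * (Matrix.fromBlocks (N k) 0 0 (Nt k))ᵀ) t)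
    (t : ℝ) (ht : 0 ≤ t) :
    ∑ i, (C.mulVec (x t) i - Ct.mulVec (xt t) i) ^ 2
      ≤ (Matrix.fromCols C (-Ct) * Ze t * (Matrix.fromCols C (-Ct))ᵀ).trace
        * Real.exp (∫ v in (0 : ℝ)..t,
            ∑ k, (γ * (if Matrix.fromBlocks (N k) 0 0 (Nt k) = 0 then (0 : ℝ) else u v k)) ^ 2)
        * (∑ i, v₀ i ^ 2) := by
  set Ne := fun k => fromBlocks (N k) 0 0 (Nt k)
  set F := ∫ v in (0 : ℝ)..t, ∑ k, (γ * (if Ne k = 0 then (0 : ℝ) else u v k)) ^ 2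
  set w := fun s => Sum.elim (x s) (xt s)
  set L := fromCols C (-Ct)
  have hw0 : w 0 = fromRows X₀ Xt₀ *ᵥ v₀ := by simp [w, hx0, hxt0, fromRows_mulVec]
  have hw : ∀ s ∈ Icc 0 t, HasDerivAt w (fromBlocks A 0 0 At *ᵥ w s + ∑ k, u s k • Ne k *ᵥ w s) s :=
    fun s hs => hasDerivAt_sumElim_fromBlocks (hxode s hs.1) (hxtode s hs.1)
  have hZ : ∀ s ∈ Icc 0 t,
      HasDerivAt Ze (lyapunovOp (fromBlocks A 0 0 At) (fun k => γ⁻¹ • Ne k) (Ze s)) s :=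
    fun s hs => by simpa only [lyapunovOp_inv_smul] using hZeode s hs.1
  have h0 : ∀ z, 0 ≤ z ⬝ᵥ ((∑ i, v₀ i ^ 2) • Ze 0 - vecMulVec (w 0) (w 0)) *ᵥ z := by
    simpa only [hw0, hZe0] using dotProduct_mulVec_sum_sq_smul_sub_vecMulVec_nonneg _ v₀
  have hPsd := dotProduct_mulVec_nonneg_of_bilinear _ _ hγ.ne' hu ht hw hZ h0
  have htrace := trace_mul_mul_transpose_nonneg L hPsd
  have hLw : L *ᵥ w t = C *ᵥ x t - Ct *ᵥ xt t := by
    simp [L, w, neg_mulVec, sub_eq_add_neg]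
  rw [Matrix.mul_sub, Matrix.sub_mul, trace_sub, Matrix.mul_smul, Matrix.smul_mul, trace_smul,
    Matrix.mul_smul, Matrix.smul_mul, trace_smul, mul_vecMulVec, vecMulVec_mul, vecMul_transpose,
    trace_vecMulVec, hLw, smul_eq_mul, smul_eq_mul, sub_nonneg] at htrace
  calc ∑ i, ((C *ᵥ x t) i - (Ct *ᵥ xt t) i) ^ 2
      = Real.exp F * (Real.exp (-F) * ((C *ᵥ x t - Ct *ᵥ xt t) ⬝ᵥ (C *ᵥ x t - Ct *ᵥ xt t))) := by
        rw [← mul_assoc, ← Real.exp_add, add_neg_cancel, Real.exp_zero, one_mul]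
        simp [dotProduct, sq]
    _ ≤ Real.exp F * ((∑ i, v₀ i ^ 2) * (L * Ze t * Lᵀ).trace) := by gcongr
    _ = (L * Ze t * Lᵀ).trace * Real.exp F * ∑ i, v₀ i ^ 2 := by ring
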